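/- arXiv:1906.09314 — 7 statements merged into one kernel-verified Lean document; each statement's English description precedes it below -/
import Mathlib

section
/- Given a fail-prone system F on a finite process set P satisfying the Q3-condition (no three fail-prone sets cover P), the canonical quorum system Q = {P \ F : F ∈ F} satisfies the consistency property: for all quorums Q1, Q2 and all fail-prone sets F, Q1 ∩ Q2 is not contained in F. -/
/-- Canonical quorum system of a fail-prone system satisfying Q3 satisfies consistency. -/
theorem canonical_consistency {α : Type*} [DecidableEq α]
    (P : Finset α) (𝓕 : Set (Finset α))
    (hQ3 : ∀ F1 ∈ 𝓕, ∀ F2 ∈ 𝓕, ∀ F3 ∈ 𝓕, ¬ P ⊆ F1 ∪ F2 ∪ F3) :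
    ∀ Q1 ∈ {Q | ∃ F ∈ 𝓕, Q = P \ F}, ∀ Q2 ∈ {Q | ∃ F ∈ 𝓕, Q = P \ F},
      ∀ F ∈ 𝓕, ¬ (Q1 ∩ Q2 ⊆ F) := by
  rintro Q1 ⟨F1, hF1, rfl⟩ Q2 ⟨F2, hF2, rfl⟩ F hF hsub
  apply hQ3 F1 hF1 F2 hF2 F hF
  intro x hx
  simp only [Finset.mem_union]
  by_cases h1 : x ∈ F1
  · exact Or.inl (Or.inl h1)
  by_cases h2 : x ∈ F2
  · exact Or.inl (Or.inr h2)
  · exact Or.inr (hsub (by simp [hx, h1, h2]))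
end

section
/- Let 𝔽 = [F_1, ..., F_n] be an asymmetric fail-prone system on processes P satisfying the B3-condition. Then the array of canonical quorum systems Q_i = {P \ F : F ∈ F_i} forms an asymmetric Byzantine quorum system for 𝔽, i.e., it satisfies both the asymmetric consistency and availability conditions. -/
/-- Downward closure of a collection of process sets. -/
def dc {n : ℕ} (A : Set (Finset (Fin n))) : Set (Finset (Fin n)) :=
  {B | ∃ C ∈ A, B ⊆ C}

/-- The B3-condition for an asymmetric fail-prone system. -/
def B3 {n : ℕ} (𝓕 : Fin n → Set (Finset (Fin n))) : Prop :=
  ∀ i j : Fin n, ∀ Fi ∈ 𝓕 i, ∀ Fj ∈ 𝓕 j, ∀ Fij ∈ dc (𝓕 i) ∩ dc (𝓕 j),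
    ¬ (Finset.univ : Finset (Fin n)) ⊆ Fi ∪ Fj ∪ Fij

/-- Consistency of an asymmetric Byzantine quorum system. -/
def AsymConsistency {n : ℕ} (𝓕 𝓠 : Fin n → Set (Finset (Fin n))) : Prop :=
  ∀ i j : Fin n, ∀ Qi ∈ 𝓠 i, ∀ Qj ∈ 𝓠 j, ∀ Fij ∈ dc (𝓕 i) ∩ dc (𝓕 j),
    ¬ (Qi ∩ Qj ⊆ Fij)

/-- Availability of an asymmetric Byzantine quorum system. -/
def AsymAvailability {n : ℕ} (𝓕 𝓠 : Fin n → Set (Finset (Fin n))) : Prop :=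
  ∀ i : Fin n, ∀ F ∈ 𝓕 i, ∃ Q ∈ 𝓠 i, F ∩ Q = ∅

/-- If B3 holds, the canonical asymmetric quorum system is an asymmetric BQS. -/
theorem canonical_asym_bqs {n : ℕ} (𝓕 : Fin n → Set (Finset (Fin n)))
    (hB3 : B3 𝓕) :
    AsymConsistency 𝓕 (fun i => {Q | ∃ F ∈ 𝓕 i, Q = Finset.univ \ F}) ∧
    AsymAvailability 𝓕 (fun i => {Q | ∃ F ∈ 𝓕 i, Q = Finset.univ \ F}) := by
  constructor
  · intro i j Qi hQi Qj hQj Fij hFij hsub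
    obtain ⟨Fi, hFi, rfl⟩ := hQi
    obtain ⟨Fj, hFj, rfl⟩ := hQj
    apply hB3 i j Fi hFi Fj hFj Fij hFij
    intro x _
    by_cases hx : x ∈ Fi ∪ Fj
    · simp only [Finset.mem_union] at hx ⊢; tauto
    · simp only [Finset.mem_union, not_or] at hx
      have : x ∈ (Finset.univ \ Fi) ∩ (Finset.univ \ Fj) := by
        simp [hx.1, hx.2]
      have := hsub this
      simp [this]
  · intro i F hF
    exact ⟨Finset.univ \ F, ⟨F, hF, rfl⟩, by simp [Finset.inter_sdiff_self]⟩
end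

section
/- If an asymmetric fail-prone system 𝔽 = [F_1, ..., F_n] on P admits an asymmetric Byzantine quorum system (satisfying consistency and availability), then 𝔽 satisfies the B3-condition. -/
/-- If an asymmetric BQS exists for 𝓕, then 𝓕 satisfies B3. -/
theorem asym_bqs_implies_B3 {n : ℕ} (𝓕 𝓠 : Fin n → Set (Finset (Fin n)))
    (hcons : AsymConsistency 𝓕 𝓠) (havail : AsymAvailability 𝓕 𝓠) :
    B3 𝓕 := by
  intro i j Fi hFi Fj hFj Fij hFij hsub
  obtain ⟨Qi, hQi, hFiQi⟩ := havail i Fi hFi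
  obtain ⟨Qj, hQj, hFjQj⟩ := havail j Fj hFj
  apply hcons i j Qi hQi Qj hQj Fij hFij
  intro p hp
  have hp' := hsub (Finset.mem_univ p)
  simp only [Finset.mem_union] at hp'
  rcases hp' with (h | h) | h
  · exact absurd (Finset.mem_inter.mpr ⟨h, (Finset.mem_inter.mp hp).1⟩)
      (by simp [hFiQi])
  · exact absurd (Finset.mem_inter.mpr ⟨h, (Finset.mem_inter.mp hp).2⟩)
      (by simp [hFjQj])
  · exact h
end

section
/- An asymmetric fail-prone system 𝔽 satisfies the B3-condition if and only if there exists an asymmetric Byzantine quorum system for 𝔽. -/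
/-- B3 holds iff there exists an asymmetric Byzantine quorum system for 𝓕. -/
theorem B3_iff_asym_bqs_exists {n : ℕ} (𝓕 : Fin n → Set (Finset (Fin n))) :
    B3 𝓕 ↔ ∃ 𝓠 : Fin n → Set (Finset (Fin n)),
      AsymConsistency 𝓕 𝓠 ∧ AsymAvailability 𝓕 𝓠 := by
  constructor
  · intro hB3
    refine ⟨fun i => (fun F => Fᶜ) '' (𝓕 i), ?_, ?_⟩
    · rintro i j Qi ⟨Fi, hFi, rfl⟩ Qj ⟨Fj, hFj, rfl⟩ Fij hFij hsub
      apply hB3 i j Fi hFi Fj hFj Fij hFij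
      intro x _
      simp only [Finset.mem_union]
      by_cases hi : x ∈ Fi
      · exact Or.inl (Or.inl hi)
      by_cases hj : x ∈ Fj
      · exact Or.inl (Or.inr hj)
      · exact Or.inr (hsub (Finset.mem_inter.2 ⟨Finset.mem_compl.2 hi, Finset.mem_compl.2 hj⟩))
    · intro i F hF
      exact ⟨Fᶜ, ⟨F, hF, rfl⟩, by simp⟩
  · rintro ⟨𝓠, hCons, hAvail⟩ i j Fi hFi Fj hFj Fij hFij hsub
    obtain ⟨Qi, hQi, hFiQi⟩ := hAvail i Fi hFi
    obtain ⟨Qj, hQj, hFjQj⟩ := hAvail j Fj hFj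
    apply hCons i j Qi hQi Qj hQj Fij hFij
    intro x hx
    obtain ⟨hxi, hxj⟩ := Finset.mem_inter.1 hx
    have := hsub (Finset.mem_univ x)
    simp only [Finset.mem_union] at this
    rcases this with (h | h) | h
    · exact absurd (Finset.mem_inter.2 ⟨h, hxi⟩) (by simp [hFiQi])
    · exact absurd (Finset.mem_inter.2 ⟨h, hxj⟩) (by simp [hFjQj])
    · exact h
end

section
/- In any execution of an asymmetric Byzantine quorum system that contains at least one guild, there exists a unique maximal guild containing every guild. -/
/-- A process is wise for faulty set F if F is in the downward closure of its fail-prone system. -/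
def Wise {n : ℕ} (𝓕 : Fin n → Set (Finset (Fin n))) (F : Finset (Fin n)) (i : Fin n) : Prop :=
  F ∈ dc (𝓕 i)

/-- A guild for faulty set F: all members are wise, and it contains a quorum for each member. -/
def Guild {n : ℕ} (𝓕 𝓠 : Fin n → Set (Finset (Fin n))) (F : Finset (Fin n))
    (G : Finset (Fin n)) : Prop :=
  (∀ i ∈ G, Wise 𝓕 F i) ∧ (∀ i ∈ G, ∃ Q ∈ 𝓠 i, Q ⊆ G)

/-- In any execution with a guild there is a unique maximal guild containing every guild. -/
theorem exists_unique_maximal_guild {n : ℕ} (𝓕 𝓠 : Fin n → Set (Finset (Fin n)))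
    (hcons : AsymConsistency 𝓕 𝓠) (havail : AsymAvailability 𝓕 𝓠)
    (F : Finset (Fin n)) (hex : ∃ G, Guild 𝓕 𝓠 F G) :
    ∃! Gmax : Finset (Fin n),
      Guild 𝓕 𝓠 F Gmax ∧ ∀ G, Guild 𝓕 𝓠 F G → G ⊆ Gmax := by
  classical
  set Gmax : Finset (Fin n) :=
    Finset.univ.filter (fun i => ∃ G, Guild 𝓕 𝓠 F G ∧ i ∈ G) with hGmax
  have hsub : ∀ G, Guild 𝓕 𝓠 F G → G ⊆ Gmax := by
    intro G hG i hi
    exact Finset.mem_filter.2 ⟨Finset.mem_univ _, G, hG, hi⟩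
  have hguild : Guild 𝓕 𝓠 F Gmax := by
    constructor
    · intro i hi
      obtain ⟨-, G, hG, hiG⟩ := Finset.mem_filter.1 hi
      exact hG.1 i hiG
    · intro i hi
      obtain ⟨-, G, hG, hiG⟩ := Finset.mem_filter.1 hi
      obtain ⟨Q, hQ, hQG⟩ := hG.2 i hiG
      exact ⟨Q, hQ, hQG.trans (hsub G hG)⟩
  refine ⟨Gmax, ⟨hguild, hsub⟩, ?_⟩
  rintro G' ⟨hG', hall⟩
  exact Finset.Subset.antisymm (hsub G' hG') (hall Gmax hguild)
end

section
/- In an asymmetric Byzantine quorum system, if processes p_i and p_j are both wise with respect to the faulty set F, then for every quorum Q_i ∈ Q_i the set K = Q_i \ F intersects every quorum of p_j. -/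
/-- If p_i and p_j are wise, then for every quorum Qi of p_i, Qi \ F intersects
every quorum of p_j. -/
theorem wise_kernel_intersects {n : ℕ} (𝓕 𝓠 : Fin n → Set (Finset (Fin n)))
    (hcons : AsymConsistency 𝓕 𝓠) (havail : AsymAvailability 𝓕 𝓠)
    (F : Finset (Fin n)) (i j : Fin n)
    (hi : Wise 𝓕 F i) (hj : Wise 𝓕 F j)
    (Qi : Finset (Fin n)) (hQi : Qi ∈ 𝓠 i) :
    ∀ Qj ∈ 𝓠 j, ((Qi \ F) ∩ Qj).Nonempty := by
  intro Qj hQj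
  have h := hcons i j Qi hQi Qj hQj F ⟨hi, hj⟩
  rw [Finset.not_subset] at h
  obtain ⟨x, hx, hxF⟩ := h
  rw [Finset.mem_inter] at hx
  exact ⟨x, Finset.mem_inter.mpr ⟨Finset.mem_sdiff.mpr ⟨hx.1, hxF⟩, hx.2⟩⟩
end

section
/- Consider Bracha-style reliable broadcast over an asymmetric quorum system: suppose in an execution with faulty set F there exists a guild G. If a wise process p_i collects messages from a quorum Q_i ∈ Q_i of processes, then the correct part Q_i \ F is nonempty and, for every wise process p_j, intersects every quorum of p_j; consequently Q_i \ F contains a kernel for p_j. -/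
/-!
Consistency applied to the faulty set `F` itself, which lies in the downward closure of the
fail-prone systems of any two wise processes, says that a quorum of one and a quorum of the other
share a correct process. A kernel inside `Qi \ F` is then an inclusion-minimal subset that still
meets every quorum, which exists because finsets are well-founded under inclusion.
-/

theorem Finset.exists_minimal_subset_inter_nonempty {α : Type*} [DecidableEq α]
    {𝓠 : Set (Finset α)} {S : Finset α} (hS : ∀ Q ∈ 𝓠, (S ∩ Q).Nonempty) :
    ∃ K ⊆ S, (∀ Q ∈ 𝓠, (K ∩ Q).Nonempty) ∧ ∀ K' ⊂ K, ∃ Q ∈ 𝓠, K' ∩ Q = ∅ := by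
  obtain ⟨K, hKS, hK⟩ :=
    exists_minimal_le_of_wellFoundedLT (fun K => ∀ Q ∈ 𝓠, (K ∩ Q).Nonempty) S hS
  refine ⟨K, hKS, hK.prop, fun K' hK' => ?_⟩
  by_contra! hK'_meets
  exact hK.not_prop_of_lt hK' hK'_meets

theorem AsymConsistency.sdiff_inter_nonempty {n : ℕ} {𝓕 𝓠 : Fin n → Set (Finset (Fin n))}
    (hcons : AsymConsistency 𝓕 𝓠) {F : Finset (Fin n)} {i j : Fin n}
    (hi : Wise 𝓕 F i) (hj : Wise 𝓕 F j) {Qi Qj : Finset (Fin n)}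
    (hQi : Qi ∈ 𝓠 i) (hQj : Qj ∈ 𝓠 j) : ((Qi \ F) ∩ Qj).Nonempty := by
  obtain ⟨x, hx, hxF⟩ := Finset.not_subset.1 (hcons i j Qi hQi Qj hQj F ⟨hi, hj⟩)
  rw [Finset.mem_inter] at hx
  exact ⟨x, Finset.mem_inter.2 ⟨Finset.mem_sdiff.2 ⟨hx.1, hxF⟩, hx.2⟩⟩

theorem bracha_kernel_general {n : ℕ} (𝓕 𝓠 : Fin n → Set (Finset (Fin n)))
    (hcons : AsymConsistency 𝓕 𝓠)
    (F : Finset (Fin n))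
    (i : Fin n) (hi : Wise 𝓕 F i)
    (Qi : Finset (Fin n)) (hQi : Qi ∈ 𝓠 i) :
    (Qi \ F).Nonempty ∧
    ∀ j : Fin n, Wise 𝓕 F j →
      (∀ Qj ∈ 𝓠 j, ((Qi \ F) ∩ Qj).Nonempty) ∧
      ∃ K ⊆ Qi \ F, (∀ Q ∈ 𝓠 j, (K ∩ Q).Nonempty) ∧
        ∀ K' ⊂ K, ∃ Q ∈ 𝓠 j, K' ∩ Q = ∅ := by
  have hmeets : ∀ j, Wise 𝓕 F j → ∀ Qj ∈ 𝓠 j, ((Qi \ F) ∩ Qj).Nonempty :=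
    fun _ hj _ hQj => hcons.sdiff_inter_nonempty hi hj hQi hQj
  exact ⟨(hmeets i hi Qi hQi).mono Finset.inter_subset_left, fun j hj =>
    ⟨hmeets j hj, Finset.exists_minimal_subset_inter_nonempty (hmeets j hj)⟩⟩

/-- In an execution with a guild, the correct part of a wise process'"'"' quorum is nonempty,
intersects every quorum of every wise process, and contains a kernel for it. -/
theorem bracha_kernel {n : ℕ} (𝓕 𝓠 : Fin n → Set (Finset (Fin n)))
    (hcons : AsymConsistency 𝓕 𝓠) (havail : AsymAvailability 𝓕 𝓠)
    (F G : Finset (Fin n)) (hG : Guild 𝓕 𝓠 F G)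
    (i : Fin n) (hi : Wise 𝓕 F i)
    (Qi : Finset (Fin n)) (hQi : Qi ∈ 𝓠 i) :
    (Qi \ F).Nonempty ∧
    ∀ j : Fin n, Wise 𝓕 F j →
      (∀ Qj ∈ 𝓠 j, ((Qi \ F) ∩ Qj).Nonempty) ∧
      ∃ K ⊆ Qi \ F, (∀ Q ∈ 𝓠 j, (K ∩ Q).Nonempty) ∧
        ∀ K' ⊂ K, ∃ Q ∈ 𝓠 j, K' ∩ Q = ∅ :=
  bracha_kernel_general 𝓕 𝓠 hcons F i hi Qi hQi
end
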